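/- Assuming β(G*) = 3 for a fixed 10-vertex graph G* and β(K_2) = 1, where β is the maximum independence number over the LC orbit: for k ≥ 2 with k−1 = 3q + r (0 ≤ r ≤ 2), there exists a graph on 10q + v(r) vertices (v(0)=0, v(1)=2, v(2)=6) not containing E_k as a vertex-minor, provided there also exists a 6-vertex graph with β = 2; hence R_vm(k) ≥ 10q + v(r) + 1. -/

import Mathlib

/-!
Local complementation at a vertex of one component of a disjoint union leaves the other
component untouched, so every graph in the LC orbit of `G ⊕g H` is a disjoint union of graphs
from the two orbits, and `lcBeta` is subadditive; it also cannot grow when passing to an induced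
subgraph. Gluing `q` copies of `B₃` to `B₁`, `B₂` or nothing gives a graph `G` with
`lcBeta G ≤ 3q + r = k - 1`, so neither `G` nor any of its induced subgraphs has `E_k` as a
vertex-minor. Since local complementation at a vertex of a `(k+1)`-clique leaves an independent
`k`-set, Ramsey's theorem shows that large graphs do contain `E_k`, so `Rvm k` is a genuine
minimum and exceeds the number of vertices of `G`.
-/

open SimpleGraph

variable {V : Type*}

/-- Local complementation of `G` at `v`: toggle edges between distinct neighbors of `v`. -/
def lc (G : SimpleGraph V) (v : V) : SimpleGraph V where
  Adj x y := x ≠ y ∧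
    (((G.Adj v x ∧ G.Adj v y) ∧ ¬ G.Adj x y) ∨ (¬(G.Adj v x ∧ G.Adj v y) ∧ G.Adj x y))
  symm := ⟨by
    rintro x y ⟨hxy, h⟩
    refine ⟨hxy.symm, ?_⟩
    rcases h with ⟨⟨ha, hb⟩, hc⟩ | ⟨ha, hb⟩
    · exact Or.inl ⟨⟨hb, ha⟩, fun h' => hc h'.symm⟩
    · exact Or.inr ⟨fun h' => ha ⟨h'.2, h'.1⟩, hb.symm⟩⟩
  loopless := ⟨fun x h => h.1 rfl⟩

/-- `lcEquiv G H` iff `H` is obtained from `G` by a finite sequence of local complementations. -/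
def lcEquiv (G H : SimpleGraph V) : Prop := ∃ l : List V, H = l.foldl lc G

/-- `H` is a vertex-minor of `G`: `H` is isomorphic to an induced subgraph of a member of
the LC orbit of `G`. -/
def IsVertexMinor {W : Type*} (H : SimpleGraph W) (G : SimpleGraph V) : Prop :=
  ∃ G' : SimpleGraph V, lcEquiv G G' ∧ ∃ s : Set V, Nonempty (H ≃g G'.induce s)

/-- `s` is an independent set of `G`. -/
def IsIndep (G : SimpleGraph V) (s : Set V) : Prop := s.Pairwise (fun a b => ¬ G.Adj a b)

/-- The independence number of `G`. -/
noncomputable def indepNum (G : SimpleGraph V) : ℕ :=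
  sSup {n | ∃ s : Finset V, IsIndep G ↑s ∧ s.card = n}

/-- Maximum independence number over the LC orbit of `G`. -/
noncomputable def lcBeta (G : SimpleGraph V) : ℕ :=
  sSup {n | ∃ G' : SimpleGraph V, lcEquiv G G' ∧ ∃ s : Finset V, IsIndep G' ↑s ∧ s.card = n}


/-- The vertex-minor Ramsey number: the least `n` such that every graph on `n` vertices
contains the edgeless graph `E k` as a vertex-minor. -/
noncomputable def Rvm (k : ℕ) : ℕ :=
  sInf {n | ∀ G : SimpleGraph (Fin n), IsVertexMinor (⊥ : SimpleGraph (Fin k)) G}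

variable {W : Type*}

@[simp] lemma lc_adj (G : SimpleGraph V) (v x y : V) :
    (lc G v).Adj x y ↔ x ≠ y ∧ (((G.Adj v x ∧ G.Adj v y) ∧ ¬ G.Adj x y) ∨
      (¬(G.Adj v x ∧ G.Adj v y) ∧ G.Adj x y)) :=
  Iff.rfl

lemma lcEquiv_refl (G : SimpleGraph V) : lcEquiv G G := ⟨[], rfl⟩

lemma lcEquiv_lc (G : SimpleGraph V) (v : V) : lcEquiv G (lc G v) := ⟨[v], rfl⟩

lemma lc_comap (G : SimpleGraph W) {f : V → W} (hf : Function.Injective f) (v : V) :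
    lc (G.comap f) v = (lc G (f v)).comap f := by
  ext x y
  simp only [lc_adj, comap_adj, ne_eq, hf.ne_iff]

lemma lc_sum_inl (G : SimpleGraph V) (H : SimpleGraph W) (v : V) :
    lc (G ⊕g H) (.inl v) = lc G v ⊕g H := by
  ext (x | x) (y | y) <;> simp
  exact Adj.ne

lemma lc_sum_inr (G : SimpleGraph V) (H : SimpleGraph W) (w : W) :
    lc (G ⊕g H) (.inr w) = G ⊕g lc H w := by
  ext (x | x) (y | y) <;> simp
  exact Adj.ne

lemma lcEquiv.exists_of_comap {G : SimpleGraph W} {f : V → W} (hf : Function.Injective f)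
    {G' : SimpleGraph V} (h : lcEquiv (G.comap f) G') :
    ∃ H', lcEquiv G H' ∧ G' = H'.comap f := by
  obtain ⟨l, rfl⟩ := h
  induction l generalizing G with
  | nil => exact ⟨G, lcEquiv_refl G, rfl⟩
  | cons v l ih =>
    obtain ⟨H', ⟨l', rfl⟩, hH'⟩ := ih (G := lc G (f v))
    exact ⟨_, ⟨f v :: l', rfl⟩, by rw [List.foldl_cons, lc_comap G hf, hH']; rfl⟩

lemma lcEquiv.exists_of_sum {G : SimpleGraph V} {H : SimpleGraph W} {K : SimpleGraph (V ⊕ W)}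
    (h : lcEquiv (G ⊕g H) K) : ∃ G' H', lcEquiv G G' ∧ lcEquiv H H' ∧ K = G' ⊕g H' := by
  obtain ⟨l, rfl⟩ := h
  induction l generalizing G H with
  | nil => exact ⟨G, H, lcEquiv_refl G, lcEquiv_refl H, rfl⟩
  | cons v l ih =>
    rcases v with v | w
    · obtain ⟨G', H', ⟨l₁, rfl⟩, hH, hK⟩ := ih (G := lc G v) (H := H)
      exact ⟨_, H', ⟨v :: l₁, rfl⟩, hH, by rw [List.foldl_cons, lc_sum_inl, hK]; rfl⟩
    · obtain ⟨G', H', hG, ⟨l₂, rfl⟩, hK⟩ := ih (G := G) (H := lc H w)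
      exact ⟨G', _, hG, ⟨w :: l₂, rfl⟩, by rw [List.foldl_cons, lc_sum_inr, hK]; rfl⟩

lemma lcBeta_le {G : SimpleGraph V} {m : ℕ}
    (h : ∀ G' (s : Finset V), lcEquiv G G' → G'.IsIndepSet s → s.card ≤ m) :
    lcBeta G ≤ m :=
  csSup_le ⟨0, G, lcEquiv_refl G, ∅, by simp [IsIndep]⟩ fun _ ⟨G', hG', s, hs, hn⟩ =>
    hn ▸ h G' s hG' hs

lemma card_le_lcBeta [Fintype V] {G G' : SimpleGraph V} {s : Finset V} (hG' : lcEquiv G G')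
    (hs : G'.IsIndepSet s) : s.card ≤ lcBeta G :=
  le_csSup ⟨Fintype.card V, fun _ ⟨_, _, t, _, ht⟩ => ht ▸ t.card_le_univ⟩
    ⟨G', hG', s, hs, rfl⟩

lemma lcBeta_eq_zero_of_isEmpty [IsEmpty V] (G : SimpleGraph V) : lcBeta G = 0 :=
  Nat.le_zero.mp <| lcBeta_le fun _ s _ _ => by simp [Finset.eq_empty_of_isEmpty s]

lemma lcBeta_comap_le [Fintype W] (G : SimpleGraph W) {f : V → W}
    (hf : Function.Injective f) : lcBeta (G.comap f) ≤ lcBeta G := by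
  classical
  refine lcBeta_le fun G' s hG' hs => ?_
  obtain ⟨H', hH', rfl⟩ := hG'.exists_of_comap hf
  rw [← s.card_image_of_injective hf]
  refine card_le_lcBeta hH' ?_
  rw [Finset.coe_image]
  rintro _ ⟨x, hx, rfl⟩ _ ⟨y, hy, rfl⟩ hxy
  exact hs hx hy (ne_of_apply_ne f hxy)

lemma lcBeta_sum_le [Fintype V] [Fintype W] (G : SimpleGraph V) (H : SimpleGraph W) :
    lcBeta (G ⊕g H) ≤ lcBeta G + lcBeta H := by
  refine lcBeta_le fun K s hK hs => ?_
  obtain ⟨G', H', hG', hH', rfl⟩ := hK.exists_of_sum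
  have hsG : G'.IsIndepSet s.toLeft := fun x hx y hy hxy =>
    hs (by simpa using hx) (by simpa using hy) (Sum.inl_injective.ne hxy)
  have hsH : H'.IsIndepSet s.toRight := fun x hx y hy hxy =>
    hs (by simpa using hx) (by simpa using hy) (Sum.inr_injective.ne hxy)
  rw [← s.card_toLeft_add_card_toRight]
  exact add_le_add (card_le_lcBeta hG' hsG) (card_le_lcBeta hH' hsH)

lemma not_isVertexMinor_bot_of_lcBeta_lt [Fintype V] [Fintype W] {G : SimpleGraph V}
    (h : lcBeta G < Fintype.card W) : ¬ IsVertexMinor (⊥ : SimpleGraph W) G := by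
  classical
  rintro ⟨G', hG', s, ⟨e⟩⟩
  let f : W ↪ V := e.toEmbedding.toEmbedding.trans (Function.Embedding.subtype _)
  have hf : G'.IsIndepSet (Finset.univ.map f) := by
    simp only [Finset.coe_map, Finset.coe_univ, Set.image_univ]
    rintro _ ⟨a, rfl⟩ _ ⟨b, rfl⟩ - hab
    exact e.map_adj_iff.mp hab
  simpa using (card_le_lcBeta hG' hf).trans_lt h

lemma isVertexMinor_bot_of_isIndepSet {G G' : SimpleGraph V} (hG' : lcEquiv G G') {s : Finset V}
    (hs : G'.IsIndepSet s) {k : ℕ} (hk : s.card = k) :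
    IsVertexMinor (⊥ : SimpleGraph (Fin k)) G :=
  ⟨G', hG', s, ⟨(s.equivFinOfCardEq hk).symm, fun {_ _} =>
    iff_of_false (fun hab => hs (Subtype.prop _) (Subtype.prop _) (G'.ne_of_adj hab) hab)
      (by simp)⟩⟩

section Ramsey

open Finset

lemma card_filter_adj_add_card_filter_compl_adj [DecidableEq V] (G : SimpleGraph V)
    [DecidableRel G.Adj] {A : Finset V} {v : V} (hv : v ∈ A) :
    #(A.filter (G.Adj v)) + #(A.filter (Gᶜ.Adj v)) + 1 = #A := by
  have hdisj : Disjoint (A.filter (G.Adj v)) (A.filter (Gᶜ.Adj v)) :=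
    disjoint_filter.2 fun _ _ h h' => ((compl_adj G v _).mp h').2 h
  have hunion : A.filter (G.Adj v) ∪ A.filter (Gᶜ.Adj v) = A.erase v := by
    ext w
    have : G.Adj v w → v ≠ w := G.ne_of_adj
    simp only [mem_union, mem_filter, compl_adj, mem_erase]
    tauto
  rw [← card_union_of_disjoint hdisj, hunion, card_erase_add_one hv]

theorem exists_isNClique_or_isNIndepSet (G : SimpleGraph V) (s t : ℕ)
    {A : Finset V} (hA : 2 ^ (s + t) ≤ #A) :
    (∃ B ⊆ A, G.IsNClique s B) ∨ ∃ B ⊆ A, G.IsNIndepSet t B := by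
  classical
  induction hn : s + t generalizing G s t A with
  | zero => exact Or.inl ⟨∅, empty_subset A, by simp; omega⟩
  | succ n ih =>
    obtain _ | s := s
    · exact Or.inl ⟨∅, empty_subset A, by simp⟩
    obtain _ | t := t
    · exact Or.inr ⟨∅, empty_subset A, by simp [isNIndepSet_iff]⟩
    obtain ⟨v, hv⟩ : A.Nonempty := card_pos.mp (lt_of_lt_of_le (by positivity) hA)
    wlog hN : 2 ^ n ≤ #(A.filter (G.Adj v)) generalizing G s t
    · have hsplit := card_filter_adj_add_card_filter_compl_adj G hv
      have hM : 2 ^ n ≤ #(A.filter (Gᶜ.Adj v)) := by rw [hn, pow_succ] at hA; omega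
      simpa [or_comm] using this Gᶜ t s (by rwa [add_comm]) (by omega) (by convert hM)
    rcases ih G s (t + 1) (A := A.filter (G.Adj v))
        (by rwa [show s + (t + 1) = n by omega]) (by omega) with ⟨B, hB, hBc⟩ | ⟨B, hB, hBi⟩
    · refine Or.inl ⟨insert v B, insert_subset hv (hB.trans (filter_subset _ _)), ?_⟩
      exact hBc.insert fun b hb => (mem_filter.mp (hB hb)).2
    · exact Or.inr ⟨B, hB.trans (filter_subset _ _), hBi⟩

end Ramsey

lemma isIndepSet_lc_of_isClique {G : SimpleGraph V} {s : Set V} (hs : G.IsClique s) {v : V}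
    (hv : v ∈ s) : (lc G v).IsIndepSet (s \ {v}) := by
  rintro x ⟨hx, hxv⟩ y ⟨hy, hyv⟩ hxy ⟨-, hadj | hadj⟩
  · exact hadj.2 (hs hx hy hxy)
  · exact hadj.1 ⟨hs hv hx (Ne.symm hxv), hs hv hy (Ne.symm hyv)⟩

theorem isVertexMinor_bot_of_two_pow_le [Fintype V] (G : SimpleGraph V) (k : ℕ)
    (h : 2 ^ (2 * k + 1) ≤ Fintype.card V) : IsVertexMinor (⊥ : SimpleGraph (Fin k)) G := by
  classical
  rcases exists_isNClique_or_isNIndepSet G (k + 1) k (A := Finset.univ)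
      (by rwa [Finset.card_univ, show k + 1 + k = 2 * k + 1 by ring]) with
    ⟨B, -, hB⟩ | ⟨B, -, hB⟩
  · obtain ⟨v, hv⟩ : B.Nonempty := Finset.card_pos.mp (by rw [hB.card_eq]; omega)
    refine isVertexMinor_bot_of_isIndepSet (lcEquiv_lc G v) (s := B.erase v) ?_ ?_
    · rw [Finset.coe_erase]
      exact isIndepSet_lc_of_isClique hB.isClique hv
    · rw [Finset.card_erase_of_mem hv, hB.card_eq, Nat.add_sub_cancel]
  · exact isVertexMinor_bot_of_isIndepSet (lcEquiv_refl G) hB.isIndepSet hB.card_eq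

-- `Rvm k` is an `sInf`, hence `0` unless some `n` works; the Ramsey bound supplies one.
lemma le_Rvm_of_lcBeta_lt {n k : ℕ} {G : SimpleGraph (Fin n)} (h : lcBeta G < k) :
    n + 1 ≤ Rvm k := by
  refine le_csInf ⟨2 ^ (2 * k + 1), fun H => isVertexMinor_bot_of_two_pow_le H k (by simp)⟩
    fun m hm => ?_
  by_contra! hmn
  have hle : m ≤ n := by omega
  refine not_isVertexMinor_bot_of_lcBeta_lt ?_ (hm (G.comap (Fin.castLE hle)))
  simpa using (lcBeta_comap_le G (Fin.castLE_injective hle)).trans_lt h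

theorem exists_lcBeta_le_of_blocks {m β : ℕ} {B : SimpleGraph (Fin m)} (hB : lcBeta B ≤ β)
    (q : ℕ) {c γ : ℕ} {C : SimpleGraph (Fin c)} (hC : lcBeta C ≤ γ) :
    ∃ G : SimpleGraph (Fin (m * q + c)), lcBeta G ≤ β * q + γ := by
  induction q with
  | zero =>
    exact ⟨C.comap (finCongr (by simp)),
      (lcBeta_comap_le C (finCongr _).injective).trans (by simpa using hC)⟩
  | succ q ih =>
    obtain ⟨G, hG⟩ := ih
    let e : Fin (m * (q + 1) + c) ≃ Fin m ⊕ Fin (m * q + c) :=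
      (finCongr (by ring)).trans finSumFinEquiv.symm
    refine ⟨(B ⊕g G).comap e, ?_⟩
    calc lcBeta ((B ⊕g G).comap e) ≤ lcBeta (B ⊕g G) := lcBeta_comap_le _ e.injective
      _ ≤ lcBeta B + lcBeta G := lcBeta_sum_le B G
      _ ≤ β * (q + 1) + γ := by rw [mul_add_one]; omega

theorem explicit_lower_bound
    (B₁ : SimpleGraph (Fin 2)) (hB₁ : lcBeta B₁ = 1)
    (B₂ : SimpleGraph (Fin 6)) (hB₂ : lcBeta B₂ = 2)
    (B₃ : SimpleGraph (Fin 10)) (hB₃ : lcBeta B₃ = 3)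
    (k q r : ℕ) (hk : 2 ≤ k) (hqr : k - 1 = 3 * q + r) (hr : r ≤ 2) :
    (∃ G : SimpleGraph (Fin (10 * q + (if r = 0 then 0 else if r = 1 then 2 else 6))),
        ¬ IsVertexMinor (⊥ : SimpleGraph (Fin k)) G) ∧
    10 * q + (if r = 0 then 0 else if r = 1 then 2 else 6) + 1 ≤ Rvm k := by
  obtain ⟨G, hG⟩ : ∃ G : SimpleGraph
      (Fin (10 * q + if r = 0 then 0 else if r = 1 then 2 else 6)), lcBeta G ≤ 3 * q + r := by
    interval_cases r
    · simpa using exists_lcBeta_le_of_blocks hB₃.le q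
        (C := (⊥ : SimpleGraph (Fin 0))) (lcBeta_eq_zero_of_isEmpty _).le
    · simpa using exists_lcBeta_le_of_blocks hB₃.le q hB₁.le
    · simpa using exists_lcBeta_le_of_blocks hB₃.le q hB₂.le
  have hGk : lcBeta G < k := by omega
  exact ⟨⟨G, not_isVertexMinor_bot_of_lcBeta_lt (by simpa using hGk)⟩,
    le_Rvm_of_lcBeta_lt hGk⟩
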